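/- The ratio m ↦ E(m)/K(m) is strictly decreasing on the interval [0, 1); moreover E(0)/K(0) = 1 and E(m)/K(m) tends to 0 as m tends to 1 from the left. -/

import Mathlib

open Real Filter

/-- Complete elliptic integral of the first kind, `K(m)`. -/
noncomputable def ellK (m : ℝ) : ℝ :=
  ∫ t in (0:ℝ)..(π/2), 1 / Real.sqrt (1 - m * Real.sin t ^ 2)

/-- Complete elliptic integral of the second kind, `E(m)`. -/
noncomputable def ellE (m : ℝ) : ℝ :=
  ∫ t in (0:ℝ)..(π/2), Real.sqrt (1 - m * Real.sin t ^ 2)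

/-- Complete elliptic integral of the third kind, `Π(n, m)`. -/
noncomputable def ellPi (n m : ℝ) : ℝ :=
  ∫ t in (0:ℝ)..(π/2), 1 / ((1 - n * Real.sin t ^ 2) * Real.sqrt (1 - m * Real.sin t ^ 2))

/-- The constant `μ(a,b)`. -/
noncomputable def muC (a b : ℝ) : ℝ :=
  Real.sqrt ((a + b + Real.sqrt (4 + (a - b) ^ 2)) / 2)

/-- The constant `ν(a,b)`. -/
noncomputable def nuC (a b : ℝ) : ℝ :=
  Real.sqrt ((a + b - Real.sqrt (4 + (a - b) ^ 2)) / 2)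

/-- First component `Φ₁` of the period map. -/
noncomputable def Phi1 (a b : ℝ) : ℝ :=
  muC a b * ellPi ((a - b) / (a - muC a b ^ 2)) ((a - b) / a) /
    (π * Real.sqrt a * (a - muC a b ^ 2))

/-- Second component `Φ₂` of the period map. -/
noncomputable def Phi2 (a b : ℝ) : ℝ :=
  nuC a b * ellPi ((a - b) / (a - nuC a b ^ 2)) ((a - b) / a) /
    (π * Real.sqrt a * (a - nuC a b ^ 2))

/-- The parameter domain `Σ = {(a,b) : a > b, ab > 1}`. -/
def SigmaSet : Set (ℝ × ℝ) := {p | p.1 > p.2 ∧ p.1 * p.2 > 1}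

/-- The domain `Ω̃ = {(x,y) : -1/√2 < x < -1/2, x² + y² < 1/2, y > 0}`. -/
def OmegaSet : Set (ℝ × ℝ) :=
  {p | -(1 / Real.sqrt 2) < p.1 ∧ p.1 < -(1/2) ∧ p.1 ^ 2 + p.2 ^ 2 < 1/2 ∧ p.2 > 0}

/-!
`E` decreases and `K` increases in `m` because their integrands do pointwise, so `E / K`
is strictly decreasing. As `m → 1⁻`, `E` stays below `E(0) = π / 2` while `K` blows up:
the bound `1 - m sin² t ≤ (1 - m) + (t - π / 2)²` gives `K(m) ≥ arsinh (π / (2 √(1 - m)))`.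
-/

open Set
open scoped Topology

lemma one_sub_mul_sin_sq_pos {m : ℝ} (hm : m < 1) (t : ℝ) : 0 < 1 - m * sin t ^ 2 := by
  rcases le_or_gt m 0 with hm0 | hm0
  · nlinarith [sq_nonneg (sin t)]
  · nlinarith [sin_sq_le_one t]

lemma one_sub_mul_sin_sq_le {m : ℝ} (hm : m ≤ 1) (t : ℝ) :
    1 - m * sin t ^ 2 ≤ (1 - m) + (t - π / 2) ^ 2 := by
  have hcos : cos t ^ 2 ≤ (t - π / 2) ^ 2 := by
    simpa [sin_sub_pi_div_two] using sin_sq_le_sq (x := t - π / 2)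
  nlinarith [sin_sq_add_cos_sq t, sq_nonneg (cos t)]

lemma continuous_sqrt_one_sub_mul_sin_sq (m : ℝ) :
    Continuous fun t => √(1 - m * sin t ^ 2) := by
  fun_prop

lemma continuous_one_div_sqrt_one_sub_mul_sin_sq {m : ℝ} (hm : m < 1) :
    Continuous fun t => 1 / √(1 - m * sin t ^ 2) :=
  continuous_const.div (continuous_sqrt_one_sub_mul_sin_sq m)
    fun t => (sqrt_pos.2 (one_sub_mul_sin_sq_pos hm t)).ne'

lemma ellE_zero : ellE 0 = π / 2 := by simp [ellE]

lemma ellK_zero : ellK 0 = π / 2 := by simp [ellK]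

lemma ellE_nonneg (m : ℝ) : 0 ≤ ellE m :=
  intervalIntegral.integral_nonneg pi_div_two_pos.le fun _ _ => sqrt_nonneg _

lemma ellK_pos {m : ℝ} (hm : m < 1) : 0 < ellK m :=
  intervalIntegral.intervalIntegral_pos_of_pos_on
    ((continuous_one_div_sqrt_one_sub_mul_sin_sq hm).intervalIntegrable _ _)
    (fun t _ => one_div_pos.2 (sqrt_pos.2 (one_sub_mul_sin_sq_pos hm t))) pi_div_two_pos

lemma strictAntiOn_ellE : StrictAntiOn ellE (Iic 1) := by
  intro m₁ _ m₂ hm₂ h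
  refine intervalIntegral.integral_lt_integral_of_continuousOn_of_le_of_exists_lt pi_div_two_pos
    (continuous_sqrt_one_sub_mul_sin_sq m₂).continuousOn
    (continuous_sqrt_one_sub_mul_sin_sq m₁).continuousOn
    (fun t _ => sqrt_le_sqrt (by nlinarith [sq_nonneg (sin t)]))
    ⟨π / 2, right_mem_Icc.2 pi_div_two_pos.le, ?_⟩
  simpa using sqrt_lt_sqrt (sub_nonneg.2 (show m₂ ≤ 1 from hm₂)) (by linarith)

lemma strictMonoOn_ellK : StrictMonoOn ellK (Iio 1) := by
  intro m₁ hm₁ m₂ hm₂ h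
  have hpos (t : ℝ) : 0 < √(1 - m₂ * sin t ^ 2) := sqrt_pos.2 (one_sub_mul_sin_sq_pos hm₂ t)
  refine intervalIntegral.integral_lt_integral_of_continuousOn_of_le_of_exists_lt pi_div_two_pos
    (continuous_one_div_sqrt_one_sub_mul_sin_sq hm₁).continuousOn
    (continuous_one_div_sqrt_one_sub_mul_sin_sq hm₂).continuousOn
    (fun t _ => one_div_le_one_div_of_le (hpos t)
      (sqrt_le_sqrt (by nlinarith [sq_nonneg (sin t)])))
    ⟨π / 2, right_mem_Icc.2 pi_div_two_pos.le, ?_⟩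
  simpa using one_div_lt_one_div_of_lt (hpos (π / 2)) (by
    simpa using sqrt_lt_sqrt (sub_nonneg.2 (show m₂ < 1 from hm₂).le) (by linarith))

lemma ellE_le_pi_div_two {m : ℝ} (h₀ : 0 ≤ m) (h₁ : m ≤ 1) : ellE m ≤ π / 2 :=
  ellE_zero ▸ strictAntiOn_ellE.antitoneOn (mem_Iic.2 zero_le_one) (mem_Iic.2 h₁) h₀

lemma strictAntiOn_ellE_div_ellK : StrictAntiOn (fun m => ellE m / ellK m) (Iio 1) := by
  intro m₁ hm₁ m₂ hm₂ h
  have hK₁ := ellK_pos hm₁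
  calc ellE m₂ / ellK m₂ ≤ ellE m₂ / ellK m₁ := by
        gcongr
        exacts [ellE_nonneg m₂, (strictMonoOn_ellK hm₁ hm₂ h).le]
    _ < ellE m₁ / ellK m₁ := by
        gcongr
        exact strictAntiOn_ellE (Iio_subset_Iic_self hm₁) (Iio_subset_Iic_self hm₂) h

lemma continuous_one_div_sqrt_add_sq {ε : ℝ} (hε : 0 < ε) :
    Continuous fun x : ℝ => 1 / √(ε + x ^ 2) :=
  continuous_const.div (by fun_prop)
    fun x => (sqrt_pos.2 (add_pos_of_pos_of_nonneg hε (sq_nonneg x))).ne'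

lemma integral_one_div_sqrt_add_sq {ε : ℝ} (hε : 0 < ε) (a b : ℝ) :
    ∫ x in a..b, 1 / √(ε + x ^ 2) = arsinh (b / √ε) - arsinh (a / √ε) := by
  refine intervalIntegral.integral_eq_sub_of_hasDerivAt (f := fun x => arsinh (x / √ε))
    (fun x _ => ?_)
    ((continuous_one_div_sqrt_add_sq hε).intervalIntegrable _ _)
  have h := (hasDerivAt_arsinh (x / √ε)).comp x ((hasDerivAt_id x).div_const √ε)
  refine h.congr_deriv ?_
  rw [show 1 + (x / √ε) ^ 2 = (ε + x ^ 2) / ε by field_simp; rw [sq_sqrt hε.le]; ring,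
    sqrt_div' _ hε.le]
  field_simp

lemma arsinh_le_ellK {m : ℝ} (hm : m < 1) : arsinh (π / 2 / √(1 - m)) ≤ ellK m := by
  have hε : 0 < 1 - m := sub_pos.2 hm
  calc arsinh (π / 2 / √(1 - m))
        = ∫ t in (0 : ℝ)..(π / 2), 1 / √((1 - m) + (t - π / 2) ^ 2) := by
        rw [intervalIntegral.integral_comp_sub_right (fun x => 1 / √((1 - m) + x ^ 2)),
          integral_one_div_sqrt_add_sq hε]
        simp [neg_div, arsinh_neg]
    _ ≤ ellK m := intervalIntegral.integral_mono_on pi_div_two_pos.le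
        (((continuous_one_div_sqrt_add_sq hε).comp (continuous_sub_right (π / 2))).intervalIntegrable
          _ _)
        ((continuous_one_div_sqrt_one_sub_mul_sin_sq hm).intervalIntegrable _ _)
        fun t _ => one_div_le_one_div_of_le (sqrt_pos.2 (one_sub_mul_sin_sq_pos hm t))
          (sqrt_le_sqrt (one_sub_mul_sin_sq_le hm.le t))

lemma tendsto_arsinh_atTop : Tendsto arsinh atTop atTop := sinhOrderIso.symm.tendsto_atTop

lemma tendsto_ellK_nhdsLT_one : Tendsto ellK (𝓝[<] 1) atTop := by
  have h₀ : Tendsto (fun m : ℝ => 1 - m) (𝓝[<] 1) (𝓝[>] 0) := by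
    refine tendsto_nhdsWithin_iff.2
      ⟨?_, eventually_nhdsWithin_of_forall fun m hm => mem_Ioi.2 (sub_pos.2 hm)⟩
    exact ((continuous_const.sub continuous_id : Continuous fun m : ℝ => 1 - m).tendsto' 1 0
      (sub_self 1)).mono_left nhdsWithin_le_nhds
  have h : Tendsto (fun m : ℝ => π / 2 / √(1 - m)) (𝓝[<] 1) atTop := by
    simpa [div_eq_mul_inv, sqrt_inv] using
      (tendsto_sqrt_atTop.comp (tendsto_inv_nhdsGT_zero.comp h₀)).const_mul_atTop pi_div_two_pos
  exact tendsto_atTop_mono' _ (eventually_nhdsWithin_of_forall fun m hm => arsinh_le_ellK hm)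
    (tendsto_arsinh_atTop.comp h)

lemma tendsto_ellE_div_ellK_nhdsLT_one :
    Tendsto (fun m => ellE m / ellK m) (𝓝[<] 1) (𝓝 0) := by
  refine squeeze_zero' (eventually_nhdsWithin_of_forall fun m hm =>
      div_nonneg (ellE_nonneg m) (ellK_pos hm).le) ?_
    (tendsto_const_nhds.div_atTop tendsto_ellK_nhdsLT_one :
      Tendsto (fun m => π / 2 / ellK m) _ _)
  filter_upwards [Ioo_mem_nhdsLT_of_mem ⟨zero_lt_one, le_rfl⟩] with m hm
  have := ellK_pos hm.2
  gcongr
  exact ellE_le_pi_div_two hm.1.le hm.2.le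

/-- The ratio `m ↦ E(m)/K(m)` is strictly decreasing on `[0, 1)`; moreover
`E(0)/K(0) = 1` and `E(m)/K(m) → 0` as `m → 1⁻`. -/
theorem stmt_3 :
    StrictAntiOn (fun m : ℝ => ellE m / ellK m) (Set.Ico 0 1) ∧
    ellE 0 / ellK 0 = 1 ∧
    Filter.Tendsto (fun m : ℝ => ellE m / ellK m) (nhdsWithin 1 (Set.Iio 1)) (nhds 0) :=
  ⟨strictAntiOn_ellE_div_ellK.mono Ico_subset_Iio_self,
    by rw [ellE_zero, ellK_zero, div_self pi_div_two_pos.ne'],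
    tendsto_ellE_div_ellK_nhdsLT_one⟩
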